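/- arXiv:1408.2635 — 2 statements merged into one kernel-verified Lean document; each statement's English description precedes it below -/
import Mathlib

section
/- Let G be a free abelian group with basis B = (e_i)_{i∈𝓘} and let ∼ be an equivalence relation on B. Call x ∈ G 'nicely reduced' if x = e_{i₁} + ⋯ + e_{i_r} is a sum of pairwise distinct basis elements such that e_{i_j} ≁ e_{i_k} whenever j ≠ k. Let S ⊆ G satisfy: (1) every element of S is nicely reduced; (2) whenever x, y ∈ G are such that each of x, y, and x + y is nicely reduced, if two of x, y, x + y lie in S then so does the third; (3) for every nicely reduced x ∈ G \ S and every finite subset 𝓙 ⊆ 𝓘, there exists y ∈ G such that y is nicely reduced, x + y ∈ S, and y + e_j is nicely reduced for every j ∈ 𝓙. Let H be the subgroup of G generated by S. Then every nicely reduced element of H belongs to S. -/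
/-- An element of the free abelian group `ι →₀ ℤ` is *nicely reduced* (with respect to an
equivalence relation `r` on the basis indices) if it is a sum of pairwise distinct basis
elements whose indices are pairwise inequivalent. -/
def NicelyReduced {ι : Type*} (r : ι → ι → Prop) (x : ι →₀ ℤ) : Prop :=
  ∃ s : Finset ι,
    (∀ i ∈ s, ∀ j ∈ s, i ≠ j → ¬ r i j) ∧
    x = ∑ i ∈ s, Finsupp.single i 1

set_option linter.unusedSectionVars false
set_option linter.unusedVariables false

namespace NRthm

variable {ι : Type*} [DecidableEq ι]

/-- indicator element of a finset -/
noncomputable def ind (s : Finset ι) : ι →₀ ℤ := ∑ i ∈ s, Finsupp.single i 1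

/-- pairwise inequivalent -/
def pw (r : ι → ι → Prop) (s : Finset ι) : Prop :=
  ∀ i ∈ s, ∀ j ∈ s, i ≠ j → ¬ r i j

/-- all-pairs inequivalent across two finsets -/
def cross (r : ι → ι → Prop) (a b : Finset ι) : Prop :=
  ∀ i ∈ a, ∀ j ∈ b, ¬ r i j

variable {r : ι → ι → Prop}


lemma ind_apply (s : Finset ι) (j : ι) : ind s j = if j ∈ s then 1 else 0 := by
  classical
  simp [ind, Finsupp.finset_sum_apply, Finsupp.single_apply]

lemma nr_ind {s : Finset ι} (h : pw r s) : NicelyReduced r (ind s) := ⟨s, h, rfl⟩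

lemma pw_empty : pw r (∅ : Finset ι) := by intro i hi; simp at hi

lemma pw_singleton (i : ι) : pw r ({i} : Finset ι) := by
  intro a ha b hb hab; simp at ha hb; subst ha; subst hb; exact absurd rfl hab

lemma cross_empty_left (b : Finset ι) : cross r ∅ b := by intro i hi; simp at hi

lemma cross_empty_right (a : Finset ι) : cross r a ∅ := by intro i _ j hj; simp at hj

lemma cross_symm (hr : Equivalence r) {a b : Finset ι} (h : cross r a b) : cross r b a :=
  fun i hi j hj hij => h j hj i hi (hr.symm hij)

lemma cross_mono {a a' b b' : Finset ι} (ha : a' ⊆ a) (hb : b' ⊆ b) (h : cross r a b) :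
    cross r a' b' := fun i hi j hj => h i (ha hi) j (hb hj)

lemma cross_union_left {a b c : Finset ι} (h1 : cross r a c) (h2 : cross r b c) :
    cross r (a ∪ b) c := by
  intro i hi j hj
  rcases Finset.mem_union.1 hi with h | h
  · exact h1 i h j hj
  · exact h2 i h j hj

lemma cross_union_right {a b c : Finset ι} (h1 : cross r a b) (h2 : cross r a c) :
    cross r a (b ∪ c) := by
  intro i hi j hj
  rcases Finset.mem_union.1 hj with h | h
  · exact h1 i hi j h
  · exact h2 i hi j h

lemma disjoint_of_cross (hr : Equivalence r) {a b : Finset ι} (h : cross r a b) :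
    Disjoint a b := by
  rw [Finset.disjoint_left]
  intro i hia hib
  exact h i hia i hib (hr.refl i)

lemma ne_of_cross (hr : Equivalence r) {a b : Finset ι} (h : cross r a b)
    {i j : ι} (hi : i ∈ a) (hj : j ∈ b) : i ≠ j := by
  rintro rfl; exact h i hi i hj (hr.refl i)

lemma pw_union (hr : Equivalence r) {a b : Finset ι} (ha : pw r a) (hb : pw r b)
    (hab : cross r a b) : pw r (a ∪ b) := by
  intro i hi j hj hij
  rcases Finset.mem_union.1 hi with h | h <;> rcases Finset.mem_union.1 hj with h' | h'
  · exact ha i h j h' hij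
  · exact hab i h j h'
  · exact fun hrij => hab j h' i h (hr.symm hrij)
  · exact hb i h j h' hij

lemma ind_union (hr : Equivalence r) {a b : Finset ι} (h : cross r a b) :
    ind (a ∪ b) = ind a + ind b := by
  rw [ind, ind, ind, Finset.sum_union (disjoint_of_cross hr h)]

lemma cross_of_nr_add (hr : Equivalence r) {a b : Finset ι} (ha : pw r a) (hb : pw r b)
    (h : NicelyReduced r (ind a + ind b)) : cross r a b := by
  obtain ⟨w, hw, hew⟩ := h
  have hval : ∀ k, ind a k + ind b k = ind w k := by
    intro k
    have := congrArg (fun z => z k) hew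
    simpa [ind] using this
  have hmem : ∀ k, k ∈ a → k ∈ b → False := by
    intro k hka hkb
    have := hval k
    rw [ind_apply, ind_apply, ind_apply] at this
    simp [hka, hkb] at this
    split at this <;> omega
  have hsub_a : ∀ k, k ∈ a → k ∈ w := by
    intro k hka
    have := hval k
    rw [ind_apply, ind_apply, ind_apply] at this
    by_cases hkb : k ∈ b
    · exact absurd hkb (fun h => hmem k hka h)
    · simp [hka, hkb] at this
      by_contra hkw
      simp [hkw] at this
  have hsub_b : ∀ k, k ∈ b → k ∈ w := by
    intro k hkb
    have := hval k
    rw [ind_apply, ind_apply, ind_apply] at this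
    by_cases hka : k ∈ a
    · exact absurd hkb (fun h => hmem k hka h)
    · simp [hka, hkb] at this
      by_contra hkw
      simp [hkw] at this
  intro i hi j hj
  have hij : i ≠ j := fun h => hmem i hi (h ▸ hj)
  exact hw i (hsub_a i hi) j (hsub_b j hj) hij


section Slayer

variable (hr : Equivalence r) (S : Set (ι →₀ ℤ))
variable (h1 : ∀ x ∈ S, NicelyReduced r x)
variable (h2 : ∀ x y : ι →₀ ℤ, NicelyReduced r x → NicelyReduced r y →
      NicelyReduced r (x + y) →
      (x ∈ S → y ∈ S → x + y ∈ S) ∧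
      (x ∈ S → x + y ∈ S → y ∈ S) ∧
      (y ∈ S → x + y ∈ S → x ∈ S))
variable (h3 : ∀ x : ι →₀ ℤ, NicelyReduced r x → x ∉ S → ∀ 𝒥 : Finset ι,
      ∃ y : ι →₀ ℤ, NicelyReduced r y ∧ x + y ∈ S ∧
        ∀ j ∈ 𝒥, NicelyReduced r (y + Finsupp.single j 1))

include hr h1 h2 h3

/-- two-of-three, form 1: both parts in S implies union is. -/
lemma unionS {a b : Finset ι} (ha : pw r a) (hb : pw r b) (hab : cross r a b)
    (sa : ind a ∈ S) (sb : ind b ∈ S) : ind (a ∪ b) ∈ S := by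
  have hnr : NicelyReduced r (ind a + ind b) := by
    rw [← ind_union hr hab]; exact nr_ind (pw_union hr ha hb hab)
  rw [ind_union hr hab]
  exact (h2 (ind a) (ind b) (nr_ind ha) (nr_ind hb) hnr).1 sa sb

/-- two-of-three, form 2: left part and union in S implies right part is. -/
lemma cancelS_left {a b : Finset ι} (ha : pw r a) (hb : pw r b) (hab : cross r a b)
    (sa : ind a ∈ S) (sab : ind (a ∪ b) ∈ S) : ind b ∈ S := by
  have hnr : NicelyReduced r (ind a + ind b) := by
    rw [← ind_union hr hab]; exact nr_ind (pw_union hr ha hb hab)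
  rw [ind_union hr hab] at sab
  exact (h2 (ind a) (ind b) (nr_ind ha) (nr_ind hb) hnr).2.1 sa sab

/-- two-of-three, form 3: right part and union in S implies left part is. -/
lemma cancelS_right {a b : Finset ι} (ha : pw r a) (hb : pw r b) (hab : cross r a b)
    (sb : ind b ∈ S) (sab : ind (a ∪ b) ∈ S) : ind a ∈ S := by
  have hnr : NicelyReduced r (ind a + ind b) := by
    rw [← ind_union hr hab]; exact nr_ind (pw_union hr ha hb hab)
  rw [ind_union hr hab] at sab
  exact (h2 (ind a) (ind b) (nr_ind ha) (nr_ind hb) hnr).2.2 sb sab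

/-- h3, finset version. -/
lemma completion {a : Finset ι} (ha : pw r a) (hnS : ind a ∉ S) (J : Finset ι) :
    ∃ b, pw r b ∧ cross r a b ∧ ind (a ∪ b) ∈ S ∧ cross r b J := by
  obtain ⟨y, hynr, hyS, hfr⟩ := h3 (ind a) (nr_ind ha) hnS J
  obtain ⟨b, hbpw, rfl⟩ := hynr
  have hbnr : NicelyReduced r (ind b) := nr_ind hbpw
  have hab : cross r a b := cross_of_nr_add hr ha hbpw (h1 _ hyS)
  refine ⟨b, hbpw, hab, by rw [ind_union hr hab]; exact hyS, ?_⟩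
  intro i hi j hj
  have hsingle : (Finsupp.single j 1 : ι →₀ ℤ) = ind {j} := by simp [ind]
  have hnr' : NicelyReduced r (ind b + ind {j}) := by
    rw [← hsingle]; exact hfr j hj
  exact cross_of_nr_add hr hbpw (pw_singleton j) hnr' i hi j (Finset.mem_singleton_self j)

lemma zeroS : ind (∅ : Finset ι) ∈ S := by
  by_cases hS : ∃ x, x ∈ S
  · obtain ⟨x, hx⟩ := hS
    obtain ⟨s, hs, rfl⟩ := h1 x hx
    exact cancelS_left hr S h1 h2 h3 hs pw_empty (cross_empty_right s) hx
      (by rwa [Finset.union_empty])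
  · exfalso
    have hne : ind (∅ : Finset ι) ∉ S := fun h => hS ⟨_, h⟩
    obtain ⟨b, _, _, hg, _⟩ := completion hr S h1 h2 h3 pw_empty hne ∅
    exact hS ⟨_, hg⟩

/-- completion for arbitrary pw sets (trivial when already in S). -/
lemma completionAny {a : Finset ι} (ha : pw r a) (J : Finset ι) :
    ∃ b, pw r b ∧ cross r a b ∧ ind (a ∪ b) ∈ S ∧ cross r b J := by
  by_cases h : ind a ∈ S
  · exact ⟨∅, pw_empty, cross_empty_right a, by rwa [Finset.union_empty],
      cross_empty_left J⟩
  · exact completion hr S h1 h2 h3 ha h J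

/-- The key two-test exchange lemma. -/
lemma core {x y q f : Finset ι} (hx : pw r x) (hy : pw r y) (hq : pw r q) (hf : pw r f)
    (cxq : cross r x q) (cxf : cross r x f) (cyq : cross r y q) (cqf : cross r q f)
    (cyf : cross r y f)
    (gxq : ind (x ∪ q) ∈ S) (gxf : ind (x ∪ f) ∈ S) (gyq : ind (y ∪ q) ∈ S) :
    ind (y ∪ f) ∈ S := by
  by_cases hxS : ind x ∈ S
  · have hq' : ind q ∈ S := cancelS_left hr S h1 h2 h3 hx hq cxq hxS gxq
    have hf' : ind f ∈ S := cancelS_left hr S h1 h2 h3 hx hf cxf hxS gxf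
    have hy' : ind y ∈ S := cancelS_right hr S h1 h2 h3 hy hq cyq hq' gyq
    exact unionS hr S h1 h2 h3 hy hf cyf hy' hf'
  · have hfS : ind f ∉ S := fun hf' =>
      hxS (cancelS_right hr S h1 h2 h3 hx hf cxf hf' gxf)
    have hxqpw : pw r (x ∪ q) := pw_union hr hx hq cxq
    have cxq_f : cross r (x ∪ q) f := cross_union_left cxf cqf
    have hWpw : pw r ((x ∪ q) ∪ f) := pw_union hr hxqpw hf cxq_f
    have hWnS : ind ((x ∪ q) ∪ f) ∉ S := fun h =>
      hfS (cancelS_left hr S h1 h2 h3 hxqpw hf cxq_f gxq h)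
    obtain ⟨e, hepw, hWe, hWeS, hefr⟩ :=
      completion hr S h1 h2 h3 hWpw hWnS (x ∪ y ∪ q ∪ f)
    have cxe : cross r x e :=
      cross_mono (fun k hk => Finset.mem_union_left _ (Finset.mem_union_left _ hk))
        Finset.Subset.rfl hWe
    have cqe : cross r q e :=
      cross_mono (fun k hk => Finset.mem_union_left _ (Finset.mem_union_right _ hk))
        Finset.Subset.rfl hWe
    have cfe : cross r f e :=
      cross_mono (fun k hk => Finset.mem_union_right _ hk) Finset.Subset.rfl hWe
    have cye : cross r y e := by
      refine cross_symm hr (cross_mono Finset.Subset.rfl ?_ hefr)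
      intro k hk
      exact Finset.mem_union_left _ (Finset.mem_union_left _ (Finset.mem_union_right _ hk))
    have hfepw : pw r (f ∪ e) := pw_union hr hf hepw cfe
    have hqepw : pw r (q ∪ e) := pw_union hr hq hepw cqe
    have cxq_fe : cross r (x ∪ q) (f ∪ e) :=
      cross_union_left (cross_union_right cxf cxe) (cross_union_right cqf cqe)
    have EQ1 : ((x ∪ q) ∪ f) ∪ e = (x ∪ q) ∪ (f ∪ e) := Finset.union_assoc _ _ _
    have gfe : ind (f ∪ e) ∈ S :=
      cancelS_left hr S h1 h2 h3 hxqpw hfepw cxq_fe gxq (EQ1 ▸ hWeS)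
    have hxfpw : pw r (x ∪ f) := pw_union hr hx hf cxf
    have cxf_qe : cross r (x ∪ f) (q ∪ e) :=
      cross_union_left (cross_union_right cxq cxe)
        (cross_union_right (cross_symm hr cqf) cfe)
    have EQ2 : ((x ∪ q) ∪ f) ∪ e = (x ∪ f) ∪ (q ∪ e) := by
      ext k; simp only [Finset.mem_union]; tauto
    have gqe : ind (q ∪ e) ∈ S :=
      cancelS_left hr S h1 h2 h3 hxfpw hqepw cxf_qe gxf (EQ2 ▸ hWeS)
    have hyqpw : pw r (y ∪ q) := pw_union hr hy hq cyq
    have cyq_fe : cross r (y ∪ q) (f ∪ e) :=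
      cross_union_left (cross_union_right cyf cye) (cross_union_right cqf cqe)
    have gOm : ind ((y ∪ q) ∪ (f ∪ e)) ∈ S :=
      unionS hr S h1 h2 h3 hyqpw hfepw cyq_fe gyq gfe
    have EQ3 : (y ∪ q) ∪ (f ∪ e) = (y ∪ f) ∪ (q ∪ e) := by
      ext k; simp only [Finset.mem_union]; tauto
    have hyfpw : pw r (y ∪ f) := pw_union hr hy hf cyf
    have cyf_qe : cross r (y ∪ f) (q ∪ e) :=
      cross_union_left (cross_union_right cyq cye)
        (cross_union_right (cross_symm hr cqf) cfe)
    exact cancelS_right hr S h1 h2 h3 hyfpw hqepw cyf_qe gqe (EQ3 ▸ gOm)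

/-- Transfer of tests: if `q` and `t` are both tests completing `x` into `S`, and `q`
completes `y`, then `t` completes `y` as well. -/
lemma transfer {x y q t : Finset ι} (hx : pw r x) (hy : pw r y) (hq : pw r q)
    (ht : pw r t) (cxq : cross r x q) (cxt : cross r x t) (cyq : cross r y q)
    (cyt : cross r y t)
    (gxq : ind (x ∪ q) ∈ S) (gxt : ind (x ∪ t) ∈ S) (gyq : ind (y ∪ q) ∈ S) :
    ind (y ∪ t) ∈ S := by
  obtain ⟨f, hfpw, cxf, gxf, hffr⟩ := completionAny hr S h1 h2 h3 hx (q ∪ t ∪ y)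
  have cqf : cross r q f := by
    refine cross_symm hr (cross_mono Finset.Subset.rfl ?_ hffr)
    intro k hk; exact Finset.mem_union_left _ (Finset.mem_union_left _ hk)
  have ctf : cross r t f := by
    refine cross_symm hr (cross_mono Finset.Subset.rfl ?_ hffr)
    intro k hk; exact Finset.mem_union_left _ (Finset.mem_union_right _ hk)
  have cyf : cross r y f := by
    refine cross_symm hr (cross_mono Finset.Subset.rfl ?_ hffr)
    intro k hk; exact Finset.mem_union_right _ hk
  have gyf : ind (y ∪ f) ∈ S :=
    core hr S h1 h2 h3 hx hy hq hfpw cxq cxf cyq cqf cyf gxq gxf gyq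
  exact core hr S h1 h2 h3 hx hy hfpw ht cxf cxt cyf
    (cross_symm hr ctf) cyt gxf gxt gyf

/-- Equivalence of pw finsets: they admit a common completion into `S`. -/
def rel (a b : {s : Finset ι // pw r s}) : Prop :=
  ∃ u, pw r u ∧ cross r a.1 u ∧ cross r b.1 u ∧ ind (a.1 ∪ u) ∈ S ∧ ind (b.1 ∪ u) ∈ S

lemma rel_refl (a : {s : Finset ι // pw r s}) : rel S a a := by
  obtain ⟨u, hpu, cau, gau, -⟩ := completionAny hr S h1 h2 h3 a.2 ∅
  exact ⟨u, hpu, cau, cau, gau, gau⟩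

omit hr h1 h2 h3 in
lemma rel_symm {a b : {s : Finset ι // pw r s}} (h : rel S a b) : rel S b a := by
  obtain ⟨u, hpu, c1, c2, g1, g2⟩ := h
  exact ⟨u, hpu, c2, c1, g2, g1⟩

lemma rel_trans {a b c : {s : Finset ι // pw r s}} (hab : rel S a b)
    (hbc : rel S b c) : rel S a c := by
  obtain ⟨t, hpt, cat, cbt, gat, gbt⟩ := hab
  obtain ⟨u, hpu, cbu, ccu, gbu, gcu⟩ := hbc
  obtain ⟨F, hpF, cbF, gbF, hFfr⟩ :=
    completionAny hr S h1 h2 h3 b.2 (a.1 ∪ c.1 ∪ t ∪ u)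
  have caF : cross r a.1 F := by
    refine cross_symm hr (cross_mono Finset.Subset.rfl ?_ hFfr)
    intro k hk
    exact Finset.mem_union_left _ (Finset.mem_union_left _ (Finset.mem_union_left _ hk))
  have ccF : cross r c.1 F := by
    refine cross_symm hr (cross_mono Finset.Subset.rfl ?_ hFfr)
    intro k hk
    exact Finset.mem_union_left _ (Finset.mem_union_left _ (Finset.mem_union_right _ hk))
  have gaF : ind (a.1 ∪ F) ∈ S :=
    transfer hr S h1 h2 h3 b.2 a.2 hpt hpF cbt cbF cat caF gbt gbF gat
  have gcF : ind (c.1 ∪ F) ∈ S :=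
    transfer hr S h1 h2 h3 b.2 c.2 hpu hpF cbu cbF ccu ccF gbu gbF gcu
  exact ⟨F, hpF, caF, ccF, gaF, gcF⟩

lemma exists_freshRep (a : {s : Finset ι // pw r s}) (J : Finset ι) :
    ∃ c : {s : Finset ι // pw r s}, rel S a c ∧ cross r c.1 J := by
  by_cases h : ind a.1 ∈ S
  · refine ⟨⟨∅, pw_empty⟩, ⟨∅, pw_empty, cross_empty_right _, cross_empty_right _, ?_, ?_⟩,
      cross_empty_left J⟩
    · rwa [Finset.union_empty]
    · rw [Finset.union_empty]; exact zeroS hr S h1 h2 h3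
  · obtain ⟨b, hpb, cab, gab, -⟩ := completion hr S h1 h2 h3 a.2 h ∅
    have hbS : ind b ∉ S := fun hbS =>
      h (cancelS_right hr S h1 h2 h3 a.2 hpb cab hbS gab)
    obtain ⟨c, hpc, cbc, gbc, hcJ⟩ := completion hr S h1 h2 h3 hpb hbS J
    refine ⟨⟨c, hpc⟩, ⟨b, hpb, cab, cross_symm hr cbc, gab, ?_⟩, hcJ⟩
    rwa [Finset.union_comm]

/-- Addition is compatible with `rel`. -/
lemma rel_add {a a' b b' : {s : Finset ι // pw r s}} (haa' : rel S a a')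
    (hbb' : rel S b b') (hab : cross r a.1 b.1) (hab' : cross r a'.1 b'.1) :
    rel S ⟨a.1 ∪ b.1, pw_union hr a.2 b.2 hab⟩ ⟨a'.1 ∪ b'.1, pw_union hr a'.2 b'.2 hab'⟩ := by
  obtain ⟨t, hpt, cat, ca't, gat, ga't⟩ := haa'
  obtain ⟨u, hpu, cbu, cb'u, gbu, gb'u⟩ := hbb'
  obtain ⟨t2, hpt2, cat2, gat2, ht2fr⟩ :=
    completionAny hr S h1 h2 h3 a.2 (a'.1 ∪ b.1 ∪ b'.1 ∪ t ∪ u)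
  have ca't2 : cross r a'.1 t2 := by
    refine cross_symm hr (cross_mono Finset.Subset.rfl ?_ ht2fr)
    intro k hk; simp [Finset.mem_union, hk]
  have cbt2 : cross r b.1 t2 := by
    refine cross_symm hr (cross_mono Finset.Subset.rfl ?_ ht2fr)
    intro k hk; simp [Finset.mem_union, hk]
  have cb't2 : cross r b'.1 t2 := by
    refine cross_symm hr (cross_mono Finset.Subset.rfl ?_ ht2fr)
    intro k hk; simp [Finset.mem_union, hk]
  have ctt2 : cross r t t2 := by
    refine cross_symm hr (cross_mono Finset.Subset.rfl ?_ ht2fr)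
    intro k hk; simp [Finset.mem_union, hk]
  have ga't2 : ind (a'.1 ∪ t2) ∈ S :=
    transfer hr S h1 h2 h3 a.2 a'.2 hpt hpt2 cat cat2 ca't ca't2 gat gat2 ga't
  obtain ⟨u2, hpu2, cbu2, gbu2, hu2fr⟩ :=
    completionAny hr S h1 h2 h3 b.2 (a.1 ∪ a'.1 ∪ b'.1 ∪ u ∪ t2)
  have cau2 : cross r a.1 u2 := by
    refine cross_symm hr (cross_mono Finset.Subset.rfl ?_ hu2fr)
    intro k hk; simp [Finset.mem_union, hk]
  have ca'u2 : cross r a'.1 u2 := by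
    refine cross_symm hr (cross_mono Finset.Subset.rfl ?_ hu2fr)
    intro k hk; simp [Finset.mem_union, hk]
  have cb'u2 : cross r b'.1 u2 := by
    refine cross_symm hr (cross_mono Finset.Subset.rfl ?_ hu2fr)
    intro k hk; simp [Finset.mem_union, hk]
  have cuu2 : cross r u u2 := by
    refine cross_symm hr (cross_mono Finset.Subset.rfl ?_ hu2fr)
    intro k hk; simp [Finset.mem_union, hk]
  have ct2u2 : cross r t2 u2 := by
    refine cross_symm hr (cross_mono Finset.Subset.rfl ?_ hu2fr)
    intro k hk; simp [Finset.mem_union, hk]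
  have gb'u2 : ind (b'.1 ∪ u2) ∈ S :=
    transfer hr S h1 h2 h3 b.2 b'.2 hpu hpu2 cbu cbu2 cb'u cb'u2 gbu gbu2 gb'u
  have hpU : pw r (t2 ∪ u2) := pw_union hr hpt2 hpu2 ct2u2
  have cabU : cross r (a.1 ∪ b.1) (t2 ∪ u2) :=
    cross_union_left (cross_union_right cat2 cau2) (cross_union_right cbt2 cbu2)
  have cab'U : cross r (a'.1 ∪ b'.1) (t2 ∪ u2) :=
    cross_union_left (cross_union_right ca't2 ca'u2) (cross_union_right cb't2 cb'u2)
  have EQ : ∀ p q : Finset ι, (p ∪ q) ∪ (t2 ∪ u2) = (p ∪ t2) ∪ (q ∪ u2) := by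
    intro p q; ext k; simp only [Finset.mem_union]; tauto
  have g1 : ind ((a.1 ∪ b.1) ∪ (t2 ∪ u2)) ∈ S := by
    rw [EQ]
    exact unionS hr S h1 h2 h3 (pw_union hr a.2 hpt2 cat2) (pw_union hr b.2 hpu2 cbu2)
      (cross_union_left (cross_union_right hab cau2)
        (cross_union_right (cross_symm hr cbt2) ct2u2)) gat2 gbu2
  have g2 : ind ((a'.1 ∪ b'.1) ∪ (t2 ∪ u2)) ∈ S := by
    rw [EQ]
    exact unionS hr S h1 h2 h3 (pw_union hr a'.2 hpt2 ca't2) (pw_union hr b'.2 hpu2 cb'u2)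
      (cross_union_left (cross_union_right hab' ca'u2)
        (cross_union_right (cross_symm hr cb't2) ct2u2)) ga't2 gb'u2
  exact ⟨t2 ∪ u2, hpU, cabU, cab'U, g1, g2⟩

/-- The setoid of pw finsets under common-completion equivalence. -/
def st : Setoid {s : Finset ι // pw r s} :=
  ⟨rel S, ⟨rel_refl hr S h1 h2 h3, fun h => rel_symm S h,
    fun h h' => rel_trans hr S h1 h2 h3 h h'⟩⟩

/-- The quotient. -/
abbrev M := Quotient (st hr S h1 h2 h3)

noncomputable def freshRep (a : {s : Finset ι // pw r s}) (J : Finset ι) :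
    {s : Finset ι // pw r s} :=
  (exists_freshRep hr S h1 h2 h3 a J).choose

lemma freshRep_rel (a : {s : Finset ι // pw r s}) (J : Finset ι) :
    rel S a (freshRep hr S h1 h2 h3 a J) :=
  (exists_freshRep hr S h1 h2 h3 a J).choose_spec.1

lemma freshRep_cross (a : {s : Finset ι // pw r s}) (J : Finset ι) :
    cross r (freshRep hr S h1 h2 h3 a J).1 J :=
  (exists_freshRep hr S h1 h2 h3 a J).choose_spec.2

noncomputable def addT (a b : {s : Finset ι // pw r s}) : {s : Finset ι // pw r s} :=
  ⟨a.1 ∪ (freshRep hr S h1 h2 h3 b a.1).1,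
    pw_union hr a.2 (freshRep hr S h1 h2 h3 b a.1).2
      (cross_symm hr (freshRep_cross hr S h1 h2 h3 b a.1))⟩

noncomputable def addM : M hr S h1 h2 h3 → M hr S h1 h2 h3 → M hr S h1 h2 h3 :=
  Quotient.map₂ (addT hr S h1 h2 h3) (by
    intro a a' haa' b b' hbb'
    have hcc' : rel S (freshRep hr S h1 h2 h3 b a.1) (freshRep hr S h1 h2 h3 b' a'.1) :=
      rel_trans hr S h1 h2 h3 (rel_symm S (freshRep_rel hr S h1 h2 h3 b a.1))
        (rel_trans hr S h1 h2 h3 hbb' (freshRep_rel hr S h1 h2 h3 b' a'.1))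
    exact rel_add hr S h1 h2 h3 haa' hcc'
      (cross_symm hr (freshRep_cross hr S h1 h2 h3 b a.1))
      (cross_symm hr (freshRep_cross hr S h1 h2 h3 b' a'.1)))

lemma addM_mk (a b : {s : Finset ι // pw r s}) :
    addM hr S h1 h2 h3 ⟦a⟧ ⟦b⟧ = ⟦addT hr S h1 h2 h3 a b⟧ := rfl

lemma mk_union {a b : {s : Finset ι // pw r s}} (hab : cross r a.1 b.1) :
    addM hr S h1 h2 h3 ⟦a⟧ ⟦b⟧ = ⟦⟨a.1 ∪ b.1, pw_union hr a.2 b.2 hab⟩⟧ := by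
  rw [addM_mk]
  refine Quotient.sound ?_
  exact rel_add hr S h1 h2 h3 (rel_refl hr S h1 h2 h3 a)
    (rel_symm S (freshRep_rel hr S h1 h2 h3 b a.1))
    (cross_symm hr (freshRep_cross hr S h1 h2 h3 b a.1)) hab

def zeroM : M hr S h1 h2 h3 := ⟦⟨∅, pw_empty⟩⟧

omit h1 h2 h3 hr in
lemma good_rel_empty {A : Finset ι} (hA : pw r A) (h : ind A ∈ S)
    (h0 : ind (∅ : Finset ι) ∈ S) : rel S ⟨A, hA⟩ ⟨∅, pw_empty⟩ := by
  refine ⟨∅, pw_empty, cross_empty_right _, cross_empty_right _, ?_, ?_⟩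
  · rwa [Finset.union_empty]
  · rwa [Finset.union_empty]

noncomputable def negT (a : {s : Finset ι // pw r s}) : {s : Finset ι // pw r s} :=
  ⟨(completionAny hr S h1 h2 h3 a.2 ∅).choose,
    (completionAny hr S h1 h2 h3 a.2 ∅).choose_spec.1⟩

lemma negT_cross (a : {s : Finset ι // pw r s}) :
    cross r a.1 (negT hr S h1 h2 h3 a).1 :=
  (completionAny hr S h1 h2 h3 a.2 ∅).choose_spec.2.1

lemma negT_good (a : {s : Finset ι // pw r s}) :
    ind (a.1 ∪ (negT hr S h1 h2 h3 a).1) ∈ S :=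
  (completionAny hr S h1 h2 h3 a.2 ∅).choose_spec.2.2.1

lemma negT_rel {a a' : {s : Finset ι // pw r s}} (h : rel S a a') :
    rel S (negT hr S h1 h2 h3 a) (negT hr S h1 h2 h3 a') := by
  obtain ⟨t, hpt, cat, ca't, gat, ga't⟩ := h
  set b := negT hr S h1 h2 h3 a with hb
  set b' := negT hr S h1 h2 h3 a' with hb'
  obtain ⟨w, hpw, ctw, gtw, hwfr⟩ :=
    completionAny hr S h1 h2 h3 hpt (a.1 ∪ a'.1 ∪ b.1 ∪ b'.1)
  have cbw : cross r b.1 w := by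
    refine cross_symm hr (cross_mono Finset.Subset.rfl ?_ hwfr)
    intro k hk; simp [Finset.mem_union, hk]
  have cb'w : cross r b'.1 w := by
    refine cross_symm hr (cross_mono Finset.Subset.rfl ?_ hwfr)
    intro k hk; simp [Finset.mem_union, hk]
  have gbw : ind (b.1 ∪ w) ∈ S := by
    refine transfer hr S h1 h2 h3 hpt b.2 a.2 hpw (cross_symm hr cat) ctw
      (cross_symm hr (negT_cross hr S h1 h2 h3 a)) cbw ?_ gtw ?_
    · rwa [Finset.union_comm]
    · rw [Finset.union_comm]; exact negT_good hr S h1 h2 h3 a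
  have gb'w : ind (b'.1 ∪ w) ∈ S := by
    refine transfer hr S h1 h2 h3 hpt b'.2 a'.2 hpw (cross_symm hr ca't) ctw
      (cross_symm hr (negT_cross hr S h1 h2 h3 a')) cb'w ?_ gtw ?_
    · rwa [Finset.union_comm]
    · rw [Finset.union_comm]; exact negT_good hr S h1 h2 h3 a'
  exact ⟨w, hpw, cbw, cb'w, gbw, gb'w⟩

noncomputable def negM : M hr S h1 h2 h3 → M hr S h1 h2 h3 :=
  Quotient.map (negT hr S h1 h2 h3) (fun _ _ h => negT_rel hr S h1 h2 h3 h)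

lemma mk_eq_mk {A B : Finset ι} {hA : pw r A} {hB : pw r B} (h : A = B) :
    (⟦⟨A, hA⟩⟧ : M hr S h1 h2 h3) = ⟦⟨B, hB⟩⟧ := by subst h; rfl

lemma addM_comm (x y : M hr S h1 h2 h3) :
    addM hr S h1 h2 h3 x y = addM hr S h1 h2 h3 y x := by
  induction x using Quotient.ind with | _ a =>
  induction y using Quotient.ind with | _ b =>
  set c := freshRep hr S h1 h2 h3 b a.1 with hc
  have hbc : (⟦b⟧ : M hr S h1 h2 h3) = ⟦c⟧ :=
    Quotient.sound (freshRep_rel hr S h1 h2 h3 b a.1)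
  have hac : cross r a.1 c.1 := cross_symm hr (freshRep_cross hr S h1 h2 h3 b a.1)
  rw [hbc, mk_union hr S h1 h2 h3 hac, mk_union hr S h1 h2 h3 (cross_symm hr hac)]
  exact mk_eq_mk hr S h1 h2 h3 (Finset.union_comm _ _)

lemma addM_assoc (x y z : M hr S h1 h2 h3) :
    addM hr S h1 h2 h3 (addM hr S h1 h2 h3 x y) z
      = addM hr S h1 h2 h3 x (addM hr S h1 h2 h3 y z) := by
  induction x using Quotient.ind with | _ a =>
  induction y using Quotient.ind with | _ b =>
  induction z using Quotient.ind with | _ c =>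
  set b' := freshRep hr S h1 h2 h3 b a.1 with hb'
  set c' := freshRep hr S h1 h2 h3 c (a.1 ∪ b'.1) with hc'
  have hbb' : (⟦b⟧ : M hr S h1 h2 h3) = ⟦b'⟧ :=
    Quotient.sound (freshRep_rel hr S h1 h2 h3 b a.1)
  have hcc' : (⟦c⟧ : M hr S h1 h2 h3) = ⟦c'⟧ :=
    Quotient.sound (freshRep_rel hr S h1 h2 h3 c (a.1 ∪ b'.1))
  have cab' : cross r a.1 b'.1 := cross_symm hr (freshRep_cross hr S h1 h2 h3 b a.1)
  have hc'J : cross r c'.1 (a.1 ∪ b'.1) := freshRep_cross hr S h1 h2 h3 c (a.1 ∪ b'.1)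
  have cac' : cross r a.1 c'.1 :=
    cross_symm hr (cross_mono Finset.Subset.rfl Finset.subset_union_left hc'J)
  have cbc' : cross r b'.1 c'.1 :=
    cross_symm hr (cross_mono Finset.Subset.rfl Finset.subset_union_right hc'J)
  rw [hbb', hcc', mk_union hr S h1 h2 h3 cab']
  rw [mk_union hr S h1 h2 h3 (show cross r (a.1 ∪ b'.1) c'.1 from
    cross_union_left cac' cbc')]
  rw [mk_union hr S h1 h2 h3 cbc']
  rw [mk_union hr S h1 h2 h3 (show cross r a.1 (b'.1 ∪ c'.1) from
    cross_union_right cab' cac')]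
  exact mk_eq_mk hr S h1 h2 h3 (Finset.union_assoc _ _ _)

lemma zero_addM (x : M hr S h1 h2 h3) :
    addM hr S h1 h2 h3 (zeroM hr S h1 h2 h3) x = x := by
  induction x using Quotient.ind with | _ a =>
  set c := freshRep hr S h1 h2 h3 a (∅ : Finset ι) with hc
  have hac : (⟦a⟧ : M hr S h1 h2 h3) = ⟦c⟧ :=
    Quotient.sound (freshRep_rel hr S h1 h2 h3 a ∅)
  rw [zeroM, hac, mk_union hr S h1 h2 h3 (cross_empty_left c.1)]
  exact (mk_eq_mk hr S h1 h2 h3 (Finset.empty_union _)).symm ▸ rfl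

lemma neg_addM_cancel (x : M hr S h1 h2 h3) :
    addM hr S h1 h2 h3 (negM hr S h1 h2 h3 x) x = zeroM hr S h1 h2 h3 := by
  induction x using Quotient.ind with | _ a =>
  set b := negT hr S h1 h2 h3 a with hbdef
  have hneg : negM hr S h1 h2 h3 ⟦a⟧ = ⟦b⟧ := rfl
  set a' := freshRep hr S h1 h2 h3 a b.1 with ha'
  have haa' : (⟦a⟧ : M hr S h1 h2 h3) = ⟦a'⟧ :=
    Quotient.sound (freshRep_rel hr S h1 h2 h3 a b.1)
  have cba' : cross r b.1 a'.1 := cross_symm hr (freshRep_cross hr S h1 h2 h3 a b.1)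
  rw [hneg, haa', mk_union hr S h1 h2 h3 cba']
  refine Quotient.sound ?_
  have h1' : rel S ⟨b.1 ∪ a'.1, pw_union hr b.2 a'.2 cba'⟩
      ⟨b.1 ∪ a.1, pw_union hr b.2 a.2 (cross_symm hr (negT_cross hr S h1 h2 h3 a))⟩ :=
    rel_add hr S h1 h2 h3 (rel_refl hr S h1 h2 h3 b)
      (rel_symm S (freshRep_rel hr S h1 h2 h3 a b.1)) cba'
      (cross_symm hr (negT_cross hr S h1 h2 h3 a))
  refine rel_trans hr S h1 h2 h3 h1' ?_
  refine good_rel_empty S _ ?_ (zeroS hr S h1 h2 h3)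
  rw [Finset.union_comm]
  exact negT_good hr S h1 h2 h3 a

noncomputable def Mgroup : AddCommGroup (M hr S h1 h2 h3) := by
  letI : Add (M hr S h1 h2 h3) := ⟨addM hr S h1 h2 h3⟩
  letI : Neg (M hr S h1 h2 h3) := ⟨negM hr S h1 h2 h3⟩
  letI : Zero (M hr S h1 h2 h3) := ⟨zeroM hr S h1 h2 h3⟩
  letI grp : AddGroup (M hr S h1 h2 h3) :=
    AddGroup.ofLeftAxioms (addM_assoc hr S h1 h2 h3) (zero_addM hr S h1 h2 h3)
      (neg_addM_cancel hr S h1 h2 h3)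
  exact { grp with add_comm := addM_comm hr S h1 h2 h3 }

omit hr h1 h2 h3 in
lemma pw_mono {s t : Finset ι} (h : t ⊆ s) (hs : pw r s) : pw r t :=
  fun i hi j hj hij => hs i (h hi) j (h hj) hij

end Slayer

end NRthm

/-- Let `G` be a free abelian group with basis `(e_i)_{i ∈ ι}` and `∼` an equivalence
relation on the basis.  Let `S ⊆ G` satisfy: (1) every element of `S` is nicely reduced;
(2) if `x`, `y`, `x + y` are all nicely reduced and two of `x, y, x + y` lie in `S`, then
so does the third; (3) for every nicely reduced `x ∉ S` and every finite `𝒥 ⊆ ι`, there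
is `y` nicely reduced with `x + y ∈ S` and `y + e_j` nicely reduced for all `j ∈ 𝒥`.
Then every nicely reduced element of the subgroup generated by `S` belongs to `S`. -/
theorem nicely_reduced_mem_of_mem_closure {ι : Type*}
    (r : ι → ι → Prop) (hr : Equivalence r)
    (S : Set (ι →₀ ℤ))
    (h1 : ∀ x ∈ S, NicelyReduced r x)
    (h2 : ∀ x y : ι →₀ ℤ, NicelyReduced r x → NicelyReduced r y →
      NicelyReduced r (x + y) →
      (x ∈ S → y ∈ S → x + y ∈ S) ∧
      (x ∈ S → x + y ∈ S → y ∈ S) ∧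
      (y ∈ S → x + y ∈ S → x ∈ S))
    (h3 : ∀ x : ι →₀ ℤ, NicelyReduced r x → x ∉ S → ∀ 𝒥 : Finset ι,
      ∃ y : ι →₀ ℤ, NicelyReduced r y ∧ x + y ∈ S ∧
        ∀ j ∈ 𝒥, NicelyReduced r (y + Finsupp.single j 1))
    (x : ι →₀ ℤ) (hx : x ∈ AddSubgroup.closure S) (hxnr : NicelyReduced r x) :
    x ∈ S := by
  classical
  letI : DecidableEq ι := Classical.decEq ι
  open NRthm in
  letI : AddCommGroup (M hr S h1 h2 h3) := Mgroup hr S h1 h2 h3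
  let φ : (ι →₀ ℤ) →+ M hr S h1 h2 h3 :=
    Finsupp.liftAddHom (fun i => zmultiplesHom _ (⟦⟨{i}, NRthm.pw_singleton i⟩⟧ : M hr S h1 h2 h3))
  have hzeroM : (0 : NRthm.M hr S h1 h2 h3) = ⟦⟨∅, NRthm.pw_empty⟩⟧ := rfl
  have hφ_ind : ∀ (s : Finset ι) (hs : NRthm.pw r s),
      φ (NRthm.ind s) = (⟦⟨s, hs⟩⟧ : NRthm.M hr S h1 h2 h3) := by
    intro s
    induction s using Finset.induction_on with
    | empty =>
      intro hs
      have : NRthm.ind (∅ : Finset ι) = 0 := by simp [NRthm.ind]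
      rw [this, map_zero, hzeroM]
    | @insert a s ha ih =>
      intro hs
      have hps : NRthm.pw r s := NRthm.pw_mono (Finset.subset_insert a s) hs
      have hind : NRthm.ind (insert a s) = Finsupp.single a 1 + NRthm.ind s := by
        rw [NRthm.ind, NRthm.ind, Finset.sum_insert ha]
      rw [hind, map_add, ih hps]
      have hsingle : φ (Finsupp.single a 1)
          = (⟦⟨{a}, NRthm.pw_singleton a⟩⟧ : NRthm.M hr S h1 h2 h3) := by
        rw [show φ (Finsupp.single a 1)
          = (zmultiplesHom _ (⟦⟨{a}, NRthm.pw_singleton a⟩⟧ : NRthm.M hr S h1 h2 h3)) 1 from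
            Finsupp.liftAddHom_apply_single _ a 1]
        exact one_zsmul _
      rw [hsingle]
      have hcross : NRthm.cross r ({a} : Finset ι) s := by
        intro i hi j hj
        rcases Finset.mem_singleton.1 hi with rfl
        exact hs i (Finset.mem_insert_self i s) j (Finset.mem_insert_of_mem hj)
          (fun h => ha (h ▸ hj))
      have : (⟦⟨{a}, NRthm.pw_singleton a⟩⟧ : NRthm.M hr S h1 h2 h3) + (⟦⟨s, hps⟩⟧ : NRthm.M hr S h1 h2 h3)
          = NRthm.addM hr S h1 h2 h3 ⟦⟨{a}, NRthm.pw_singleton a⟩⟧ (⟦⟨s, hps⟩⟧ : NRthm.M hr S h1 h2 h3) := rfl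
      rw [this, NRthm.mk_union hr S h1 h2 h3 hcross]
      exact NRthm.mk_eq_mk hr S h1 h2 h3 (Finset.insert_eq a s).symm
  have hker : ∀ z ∈ S, φ z = 0 := by
    intro z hz
    obtain ⟨s, hs, rfl⟩ := h1 z hz
    have : φ (NRthm.ind s) = 0 := by
      rw [hφ_ind s hs, hzeroM]
      exact Quotient.sound (NRthm.good_rel_empty S hs hz (NRthm.zeroS hr S h1 h2 h3))
    exact this
  have hφx : φ x = 0 := by
    have hle : AddSubgroup.closure S ≤ φ.ker := by
      rw [AddSubgroup.closure_le]
      intro z hz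
      simpa [AddMonoidHom.mem_ker] using hker z hz
    exact AddMonoidHom.mem_ker.mp (hle hx)
  obtain ⟨sx, hsx, rfl⟩ := hxnr
  have hx0 : (⟦⟨sx, hsx⟩⟧ : NRthm.M hr S h1 h2 h3) = ⟦⟨∅, NRthm.pw_empty⟩⟧ := by
    rw [← hzeroM, ← hφ_ind sx hsx]
    exact hφx
  have hrel : NRthm.rel S (⟨sx, hsx⟩ : {s : Finset ι // NRthm.pw r s}) ⟨∅, NRthm.pw_empty⟩ :=
    Quotient.exact hx0
  obtain ⟨t, hpt, ct, -, gt1, gt2⟩ := hrel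
  rw [Finset.empty_union] at gt2
  have : NRthm.ind sx ∈ S :=
    NRthm.cancelS_right hr S h1 h2 h3 hsx hpt ct gt2 gt1
  exact this
end

section
/- Let A be a commutative Noetherian ring and I an ideal of A. Let I₁ and I₂ be ideals of A contained in I such that I₂ ⊆ I² and I₁ + I₂ = I. Then there exist an element e ∈ I₂ and an ideal I' of A such that I = I₁ + (e), I₁ = I ∩ I', and I₂ + I' = A. -/
theorem lemma_2_11 {A : Type*} [CommRing A] [IsNoetherianRing A]
    (I I₁ I₂ : Ideal A) (h1 : I₁ ≤ I) (h2 : I₂ ≤ I) (h3 : I₂ ≤ I ^ 2)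
    (h4 : I₁ ⊔ I₂ = I) :
    ∃ e ∈ I₂, ∃ I' : Ideal A,
      I = I₁ ⊔ Ideal.span {e} ∧ I₁ = I ⊓ I' ∧ I₂ ⊔ I' = ⊤ := by
  -- work in the quotient A ⧸ I₁
  set f := Ideal.Quotient.mk I₁ with hf
  have hsurj : Function.Surjective f := Ideal.Quotient.mk_surjective
  set J : Ideal (A ⧸ I₁) := I.map f with hJ
  have hJ2 : J ≤ J • J := by
    have hI : I = I₁ ⊔ I ^ 2 := by
      refine le_antisymm ?_ ?_
      · conv_lhs => rw [← h4]
        exact sup_le le_sup_left (le_trans h3 le_sup_right)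
      · exact sup_le h1 (le_trans (Ideal.pow_le_self two_ne_zero) le_rfl)
    have : J = J ^ 2 := by
      conv_lhs => rw [hJ, hI]
      rw [Ideal.map_sup, Ideal.map_pow]
      rw [Ideal.map_quotient_self, bot_sup_eq]
    rw [Ideal.smul_eq_mul, ← pow_two, ← this]
  obtain ⟨r, hr1, hr2⟩ :=
    Submodule.exists_sub_one_mem_and_smul_eq_zero_of_fg_of_le_smul J J
      (IsNoetherian.noetherian J) hJ2
  -- lift 1 - r to e₀ ∈ I
  obtain ⟨x, hxI, hx⟩ := (Ideal.mem_map_iff_of_surjective f hsurj).mp hr1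
  set e₀ := -x with he₀
  have he₀I : e₀ ∈ I := neg_mem hxI
  have hfe₀ : f e₀ = 1 - r := by rw [he₀, map_neg, hx]; ring
  have key : ∀ y ∈ I, (1 - e₀) * y ∈ I₁ := by
    intro y hy
    rw [← Ideal.Quotient.eq_zero_iff_mem]
    have : (Ideal.Quotient.mk I₁) ((1 - e₀) * y) = r * f y := by
      rw [map_mul, map_sub, map_one, hfe₀]; ring
    rw [this]
    exact hr2 (f y) (Ideal.mem_map_of_mem f hy)
  -- split e₀ = a + b with a ∈ I₁, b ∈ I₂
  have : e₀ ∈ I₁ ⊔ I₂ := h4 ▸ he₀I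
  obtain ⟨a, ha, b, hb, hab⟩ := Submodule.mem_sup.mp this
  have keyb : ∀ y ∈ I, (1 - b) * y ∈ I₁ := by
    intro y hy
    have : (1 - b) * y = (1 - e₀) * y + a * y := by rw [← hab]; ring
    rw [this]
    exact add_mem (key y hy) (Ideal.mul_mem_right y I₁ ha)
  refine ⟨b, hb, I₁ ⊔ Ideal.span {1 - b}, ?_, ?_, ?_⟩
  · refine le_antisymm ?_ (sup_le h1 ((Ideal.span_singleton_le_iff_mem I).mpr (h2 hb)))
    intro y hy
    have : y = (1 - b) * y + y * b := by ring
    rw [this]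
    exact Submodule.add_mem_sup (keyb y hy) (Ideal.mem_span_singleton.mpr ⟨y, mul_comm y b⟩)
  · refine le_antisymm (le_inf h1 le_sup_left) ?_
    rintro y ⟨hyI, hyI'⟩
    obtain ⟨c, hc, d, hd, hcd⟩ := Submodule.mem_sup.mp hyI'
    obtain ⟨z, hz⟩ := Ideal.mem_span_singleton.mp hd
    have hb1b : b * (1 - b) ∈ I₁ := by
      have := keyb b (h2 hb); rw [mul_comm] at this; exact this
    have hby : b * y ∈ I₁ := by
      have : b * y = b * c + z * (b * (1 - b)) := by rw [← hcd, hz]; ring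
      rw [this]
      exact add_mem (Ideal.mul_mem_left I₁ b hc) (Ideal.mul_mem_left I₁ z hb1b)
    have : y = (1 - b) * y + b * y := by ring
    rw [this]
    exact add_mem (keyb y hyI) hby
  · rw [eq_top_iff]
    intro y _
    have : y = y * b + y * (1 - b) := by ring
    rw [this]
    exact add_mem
      (Submodule.mem_sup_left (Ideal.mul_mem_left I₂ y hb))
      (Submodule.mem_sup_right (Submodule.mem_sup_right (Ideal.mem_span_singleton.mpr ⟨y, mul_comm y (1-b)⟩)))
end
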